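/- Suppose a decoder Δ : ℝ^m → ℝ^n satisfies ‖x - Δ(Ax + ε)‖₂ ≤ C₀ l^{-t} σ_{l,G}(x) + C₁ε_max + δ for all x ∈ ℝ^n and all ε with ‖ε‖₂ ≤ ε_max. Then for every η with ‖Aη‖₂ ≤ ε_max, we have ‖η‖₂ ≤ C₀ l^{-t} σ_{2l,G'}(η) + 2C₁ε_max + 2δ. -/

import Mathlib

/-!
Every `w ∈ S_{2l,G'}` is `a - b` with `a, b ∈ S_{l,G}`: split its `2l`-sparse part into two
`l`-sparse parts. The signals `η + b` and `b` have the same measurements up to the admissible noise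
`A η`, so the decoder returns one point `Δ (A b)` for both. Its guarantee at `b` (where `σ = 0`) and
at `η + b` (where `σ ≤ ‖η - w‖₁`) bounds `‖η‖₂` by the triangle inequality; then take the infimum
over `w`.
-/

noncomputable section

/-- The ℓ₂ norm of a vector in ℝⁿ. -/
def l2 {n : ℕ} (x : Fin n → ℝ) : ℝ := Real.sqrt (∑ i, (x i) ^ 2)

/-- The ℓ₁ norm of a vector in ℝⁿ. -/
def l1 {n : ℕ} (x : Fin n → ℝ) : ℝ := ∑ i, |x i|

/-- The ℓ₀ "norm": number of nonzero coordinates. -/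
def l0 {n : ℕ} (x : Fin n → ℝ) : ℕ := (Finset.univ.filter fun i => x i ≠ 0).card

/-- S_{l,G}. -/
def SlG {n k : ℕ} (G : (Fin k → ℝ) → (Fin n → ℝ)) (l : ℕ) : Set (Fin n → ℝ) :=
  {w | ∃ z : Fin k → ℝ, l0 (w - G z) ≤ l}

/-- S_{2l,G'} where G'(z₀,z₁) = G z₀ - G z₁. -/
def SlG' {n k : ℕ} (G : (Fin k → ℝ) → (Fin n → ℝ)) (l : ℕ) : Set (Fin n → ℝ) :=
  {w | ∃ z₀ z₁ : Fin k → ℝ, l0 (w - (G z₀ - G z₁)) ≤ 2 * l}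

/-- σ_T(x) = inf_{xh ∈ T} ‖x - xh‖₁. -/
def sigma' {n : ℕ} (T : Set (Fin n → ℝ)) (x : Fin n → ℝ) : ℝ :=
  sInf {d : ℝ | ∃ xh ∈ T, d = l1 (x - xh)}

open Finset Matrix
open scoped Pointwise

lemma l2_eq_norm {n : ℕ} (x : Fin n → ℝ) : l2 x = ‖WithLp.toLp 2 x‖ := by
  simp [l2, EuclideanSpace.norm_eq, sq_abs]

lemma l2_nonneg {n : ℕ} (x : Fin n → ℝ) : 0 ≤ l2 x := Real.sqrt_nonneg _

lemma l2_neg {n : ℕ} (x : Fin n → ℝ) : l2 (-x) = l2 x := by simp [l2]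

lemma l2_sub_le {n : ℕ} (a b c : Fin n → ℝ) : l2 (a - c) ≤ l2 (a - b) + l2 (b - c) := by
  simpa only [l2_eq_norm, WithLp.toLp_sub] using norm_sub_le_norm_sub_add_norm_sub _ _ _

lemma l2_sub_comm {n : ℕ} (a b : Fin n → ℝ) : l2 (a - b) = l2 (b - a) := by
  rw [← l2_neg, neg_sub]

lemma l0_le_card {n : ℕ} {x : Fin n → ℝ} {T : Finset (Fin n)} (h : ∀ i, x i ≠ 0 → i ∈ T) :
    l0 x ≤ #T :=
  card_le_card fun i hi => h i (by simpa using hi)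

lemma l0_neg {n : ℕ} (x : Fin n → ℝ) : l0 (-x) = l0 x := by simp [l0]

lemma exists_add_of_l0_le_add {n a b : ℕ} {w : Fin n → ℝ} (h : l0 w ≤ a + b) :
    ∃ u v : Fin n → ℝ, w = u + v ∧ l0 u ≤ a ∧ l0 v ≤ b := by
  set S := univ.filter fun i => w i ≠ 0
  obtain ⟨T, hTS, hT⟩ := S.exists_subset_card_eq (min_le_right a #S)
  refine ⟨T.piecewise w 0, w - T.piecewise w 0, (add_sub_cancel _ _).symm, ?_, ?_⟩
  · exact (l0_le_card fun i hi => by by_contra hiT; simp [hiT] at hi).trans (hT ▸ min_le_left _ _)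
  · have hcard : #(S \ T) ≤ b := by
      have : #S ≤ a + b := h
      rw [card_sdiff_of_subset hTS]; omega
    refine (l0_le_card fun i hi => ?_).trans hcard
    by_cases hiT : i ∈ T
    · simp [hiT] at hi
    · simp_all [S]

lemma SlG'_subset_sub {n k : ℕ} (G : (Fin k → ℝ) → (Fin n → ℝ)) (l : ℕ) :
    SlG' G l ⊆ SlG G l - SlG G l := by
  rintro w ⟨z₀, z₁, hw⟩
  obtain ⟨u, v, huv, hu, hv⟩ := exists_add_of_l0_le_add (hw.trans_eq (two_mul l))
  refine ⟨G z₀ + u, ⟨z₀, by simpa using hu⟩, G z₁ - v, ⟨z₁, by simpa [l0_neg] using hv⟩, ?_⟩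
  show G z₀ + u - (G z₁ - v) = w
  rw [sub_eq_iff_eq_add'.mp huv]
  abel

lemma sigma'_le {n : ℕ} {T : Set (Fin n → ℝ)} (x : Fin n → ℝ) {y : Fin n → ℝ} (hy : y ∈ T) :
    sigma' T x ≤ l1 (x - y) :=
  csInf_le ⟨0, by rintro _ ⟨_, _, rfl⟩; exact sum_nonneg fun i _ => abs_nonneg _⟩ ⟨y, hy, rfl⟩

lemma le_mul_csInf_add {S : Set ℝ} (hS : S.Nonempty) {a b c : ℝ} (hc : 0 ≤ c)
    (h : ∀ d ∈ S, a ≤ c * d + b) : a ≤ c * sInf S + b := by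
  rcases hc.eq_or_lt with rfl | hc
  · obtain ⟨d, hd⟩ := hS
    simpa using h d hd
  · have : (a - b) / c ≤ sInf S :=
      le_csInf hS fun d hd => by rw [div_le_iff₀ hc]; linarith [h d hd]
    rw [div_le_iff₀ hc] at this
    linarith

lemma l2_sub_le_of_decoder {m n : ℕ} {A : Matrix (Fin m) (Fin n) ℝ}
    {Δ : (Fin m → ℝ) → (Fin n → ℝ)} {T : Set (Fin n → ℝ)} {C K εmax : ℝ}
    (hΔ : ∀ (x : Fin n → ℝ) (ε : Fin m → ℝ), l2 ε ≤ εmax →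
      l2 (x - Δ (A *ᵥ x + ε)) ≤ C * sigma' T x + K)
    {x v : Fin n → ℝ} (hxv : l2 (A *ᵥ (x - v)) ≤ εmax) :
    l2 (x - v) ≤ C * sigma' T x + C * sigma' T v + 2 * K := by
  have hv := hΔ v 0 (by simpa [l2] using (l2_nonneg _).trans hxv)
  have hx := hΔ x (A *ᵥ (v - x)) (by rwa [← neg_sub, mulVec_neg, l2_neg])
  rw [add_zero] at hv
  rw [mulVec_sub, add_sub_cancel] at hx
  calc l2 (x - v) ≤ l2 (x - Δ (A *ᵥ v)) + l2 (Δ (A *ᵥ v) - v) := l2_sub_le _ _ _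
    _ = l2 (x - Δ (A *ᵥ v)) + l2 (v - Δ (A *ᵥ v)) := by rw [l2_sub_comm (Δ _)]
    _ ≤ _ := by linarith

lemma l2_le_of_decoder_of_mem_SlG' {m n k : ℕ} {A : Matrix (Fin m) (Fin n) ℝ}
    {G : (Fin k → ℝ) → (Fin n → ℝ)} {l : ℕ} {Δ : (Fin m → ℝ) → (Fin n → ℝ)} {C K εmax : ℝ}
    (hC : 0 ≤ C)
    (hΔ : ∀ (x : Fin n → ℝ) (ε : Fin m → ℝ), l2 ε ≤ εmax →
      l2 (x - Δ (A *ᵥ x + ε)) ≤ C * sigma' (SlG G l) x + K)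
    {η w : Fin n → ℝ} (hη : l2 (A *ᵥ η) ≤ εmax) (hw : w ∈ SlG' G l) :
    l2 η ≤ C * l1 (η - w) + 2 * K := by
  obtain ⟨a, ha, b, hb, rfl⟩ := SlG'_subset_sub G l hw
  have key := l2_sub_le_of_decoder hΔ (x := η + b) (v := b) (by rwa [add_sub_cancel_right])
  rw [add_sub_cancel_right] at key
  have hσx : sigma' (SlG G l) (η + b) ≤ l1 (η - (a - b)) := by
    simpa only [sub_sub_eq_add_sub, add_sub_right_comm] using sigma'_le (η + b) ha
  have hσb : sigma' (SlG G l) b ≤ 0 := by simpa [l1] using sigma'_le b hb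
  linarith [mul_le_mul_of_nonneg_left hσx hC, mul_nonpos_of_nonneg_of_nonpos hC hσb]

theorem stmt9_general {m n k : ℕ} (A : Matrix (Fin m) (Fin n) ℝ)
    (G : (Fin k → ℝ) → (Fin n → ℝ)) (l : ℕ) (C₀ C₁ δ t εmax : ℝ)
    (hC₀ : 0 ≤ C₀)
    (Δ : (Fin m → ℝ) → (Fin n → ℝ))
    (hΔ : ∀ (x : Fin n → ℝ) (ε : Fin m → ℝ), l2 ε ≤ εmax →
      l2 (x - Δ (A.mulVec x + ε)) ≤
        C₀ * (l : ℝ) ^ (-t) * sigma' (SlG G l) x + C₁ * εmax + δ) :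
    ∀ η : Fin n → ℝ, l2 (A.mulVec η) ≤ εmax →
      l2 η ≤ C₀ * (l : ℝ) ^ (-t) * sigma' (SlG' G l) η + 2 * C₁ * εmax + 2 * δ := by
  intro η hη
  have hC : 0 ≤ C₀ * (l : ℝ) ^ (-t) := mul_nonneg hC₀ (Real.rpow_nonneg l.cast_nonneg _)
  have hΔ' (x : Fin n → ℝ) (ε : Fin m → ℝ) (hε : l2 ε ≤ εmax) :
      l2 (x - Δ (A *ᵥ x + ε)) ≤ C₀ * (l : ℝ) ^ (-t) * sigma' (SlG G l) x + (C₁ * εmax + δ) := by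
    rw [← add_assoc]; exact hΔ x ε hε
  have hne : {d : ℝ | ∃ w ∈ SlG' G l, d = l1 (η - w)}.Nonempty :=
    ⟨_, G 0 - G 0, ⟨0, 0, by simp [l0]⟩, rfl⟩
  calc l2 η ≤ C₀ * (l : ℝ) ^ (-t) * sigma' (SlG' G l) η + 2 * (C₁ * εmax + δ) :=
        le_mul_csInf_add hne hC fun _ ⟨w, hw, hd⟩ =>
          hd ▸ l2_le_of_decoder_of_mem_SlG' hC hΔ' hη hw
    _ = _ := by ring

/-- Necessity: any decoder with the mixed-norm guarantee forces the null-space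
    property ‖η‖₂ ≤ C₀ l^{-t} σ_{2l,G'}(η) + 2C₁ε_max + 2δ on T_A(ε_max). -/
theorem stmt9 {m n k : ℕ} (A : Matrix (Fin m) (Fin n) ℝ)
    (G : (Fin k → ℝ) → (Fin n → ℝ)) (l : ℕ) (C₀ C₁ δ t εmax : ℝ)
    (hC₀ : 0 ≤ C₀) (hC₁ : 0 ≤ C₁) (hδ : 0 ≤ δ) (ht : 0 ≤ t) (hε : 0 ≤ εmax)
    (Δ : (Fin m → ℝ) → (Fin n → ℝ))
    (hΔ : ∀ (x : Fin n → ℝ) (ε : Fin m → ℝ), l2 ε ≤ εmax →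
      l2 (x - Δ (A.mulVec x + ε)) ≤
        C₀ * (l : ℝ) ^ (-t) * sigma' (SlG G l) x + C₁ * εmax + δ) :
    ∀ η : Fin n → ℝ, l2 (A.mulVec η) ≤ εmax →
      l2 η ≤ C₀ * (l : ℝ) ^ (-t) * sigma' (SlG' G l) η + 2 * C₁ * εmax + 2 * δ :=
  stmt9_general A G l C₀ C₁ δ t εmax hC₀ Δ hΔ
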